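/- For L ∈ ℝ, let h2(α) = L(L−4)·α² − 4(L−2)·α + 8 − (8α+8)·e^{−Lα/2}. If 4 < L < 6, then h2 has exactly one root in (0,∞) and no root in (−∞,0). If L = 6, then h2(α) ≠ 0 for all α ≠ 0. -/

import Mathlib

/-!
Multiplying by `exp (L α / 2)` turns `h2 L` into
`φ(α) = (L(L-4)α² - 4(L-2)α + 8) e^{Lα/2} - 8α - 8`, which has the same zeros,
`φ(0) = φ'(0) = 0` and `φ''(α) = L² α (L(L-4)α/4 + L - 6) e^{Lα/2}`.
For `4 < L ≤ 6` we get `φ'' > 0` on `α < 0`, so `φ' < 0` and `φ > 0` there; for `L = 6` also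
`φ'' > 0` on `α > 0`. For `4 < L < 6`, `φ''` has the sign of `α (α - β)` with
`β = 4(6-L)/(L(L-4)) > 0`, so on `(0, ∞)` the function `φ'` first decreases and then increases
to `+∞`: it is negative and then positive. The same argument applied to `φ` shows that it has
exactly one positive zero.
-/

/-- The closing-condition function for U(2)-invariant gradient Kähler Ricci
solitons on `ℂP²` with a fixed point and a `ℂP¹` singular orbit along which
`f²` takes the value `L`. -/
noncomputable def h2 (L : ℝ) : ℝ → ℝ := fun α =>
  L * (L - 4) * α ^ 2 - 4 * (L - 2) * α + 8 - (8 * α + 8) * Real.exp (-L * α / 2)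

open Real Set

section SignOfDerivative

variable {f f' : ℝ → ℝ} {D : Set ℝ}

theorem strictMonoOn_of_hasDerivAt_pos (hf : ∀ x, HasDerivAt f (f' x) x) (hD : Convex ℝ D)
    (hpos : ∀ x ∈ interior D, 0 < f' x) : StrictMonoOn f D :=
  strictMonoOn_of_hasDerivWithinAt_pos hD (fun x _ => (hf x).continuousAt.continuousWithinAt)
    (fun x _ => (hf x).hasDerivWithinAt) hpos

theorem strictAntiOn_of_hasDerivAt_neg (hf : ∀ x, HasDerivAt f (f' x) x) (hD : Convex ℝ D)
    (hneg : ∀ x ∈ interior D, f' x < 0) : StrictAntiOn f D :=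
  strictAntiOn_of_hasDerivWithinAt_neg hD (fun x _ => (hf x).continuousAt.continuousWithinAt)
    (fun x _ => (hf x).hasDerivWithinAt) hneg

end SignOfDerivative

theorem exists_sign_change_of_strictAntiOn_of_strictMonoOn {g : ℝ → ℝ} {a b c : ℝ}
    (hg : ContinuousOn g (Ici b)) (hga : g a = 0) (hab : a < b)
    (hanti : StrictAntiOn g (Icc a b)) (hmono : StrictMonoOn g (Ici b))
    (hac : a ≤ c) (hc : 0 < g c) :
    ∃ r, a < r ∧ g r = 0 ∧ (∀ x ∈ Ioo a r, g x < 0) ∧ ∀ x ∈ Ioi r, 0 < g x := by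
  have neg_of_le_b : ∀ x, a < x → x ≤ b → g x < 0 := fun x hax hxb =>
    hga ▸ hanti (left_mem_Icc.2 hab.le) ⟨hax.le, hxb⟩ hax
  have hbc : b ≤ c := by
    by_contra! hcb
    rcases hac.eq_or_lt with rfl | hac
    · exact hc.ne' hga
    · exact (neg_of_le_b c hac hcb.le).not_gt hc
  obtain ⟨r, ⟨hbr, hrc⟩, hr⟩ := intermediate_value_Icc hbc (hg.mono Icc_subset_Ici_self)
    ⟨(neg_of_le_b b hab le_rfl).le, hc.le⟩
  have hbr : b < r := hbr.lt_of_ne (by rintro rfl; exact (neg_of_le_b b hab le_rfl).ne hr)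
  refine ⟨r, hab.trans hbr, hr, fun x ⟨hax, hxr⟩ => ?_, fun x hrx => ?_⟩
  · rcases le_or_gt x b with hxb | hbx
    · exact neg_of_le_b x hax hxb
    · exact hr ▸ hmono hbx.le hbr.le hxr
  · exact hr ▸ hmono hbr.le (hbr.le.trans (le_of_lt hrx)) hrx

section SecondDerivative

variable {f f' f'' : ℝ → ℝ} {a x : ℝ}

theorem pos_of_lt_of_secondDeriv_pos (hf : ∀ x, HasDerivAt f (f' x) x)
    (hf' : ∀ x, HasDerivAt f' (f'' x) x) (hfa : f a = 0) (hf'a : f' a = 0)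
    (hf'' : ∀ x < a, 0 < f'' x) (hx : x < a) : 0 < f x := by
  have hmono : StrictMonoOn f' (Iic a) :=
    strictMonoOn_of_hasDerivAt_pos hf' (convex_Iic a) fun y hy => hf'' y (by simpa using hy)
  have hanti : StrictAntiOn f (Iic a) :=
    strictAntiOn_of_hasDerivAt_neg hf (convex_Iic a) fun y hy => by
      rw [interior_Iic, mem_Iio] at hy
      simpa [hf'a] using hmono hy.le self_mem_Iic hy
  simpa [hfa] using hanti hx.le self_mem_Iic hx

theorem pos_of_gt_of_secondDeriv_pos (hf : ∀ x, HasDerivAt f (f' x) x)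
    (hf' : ∀ x, HasDerivAt f' (f'' x) x) (hfa : f a = 0) (hf'a : f' a = 0)
    (hf'' : ∀ x, a < x → 0 < f'' x) (hx : a < x) : 0 < f x := by
  have hmono' : StrictMonoOn f' (Ici a) :=
    strictMonoOn_of_hasDerivAt_pos hf' (convex_Ici a) fun y hy => hf'' y (by simpa using hy)
  have hmono : StrictMonoOn f (Ici a) :=
    strictMonoOn_of_hasDerivAt_pos hf (convex_Ici a) fun y hy => by
      rw [interior_Ici, mem_Ioi] at hy
      simpa [hf'a] using hmono' self_mem_Ici hy.le hy
  simpa [hfa] using hmono self_mem_Ici hx.le hx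

end SecondDerivative

namespace H2

noncomputable def phi (L : ℝ) : ℝ → ℝ := fun α =>
  (L * (L - 4) * α ^ 2 - 4 * (L - 2) * α + 8) * exp (L * α / 2) - 8 * α - 8

noncomputable def phi' (L : ℝ) : ℝ → ℝ := fun α =>
  (L ^ 2 * (L - 4) / 2 * α ^ 2 - 4 * L * α + 8) * exp (L * α / 2) - 8

noncomputable def phi'' (L : ℝ) : ℝ → ℝ := fun α =>
  L ^ 2 * α * (L * (L - 4) / 4 * α + (L - 6)) * exp (L * α / 2)

variable {L α : ℝ}

theorem h2_eq_zero_iff : h2 L α = 0 ↔ phi L α = 0 := by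
  have hphi : phi L α = exp (L * α / 2) * h2 L α := by
    rw [h2, neg_mul, neg_div, exp_neg, phi]
    field_simp
    ring
  rw [hphi, mul_eq_zero, or_iff_right (exp_ne_zero _)]

theorem hasDerivAt_exp_mul_div_two (L α : ℝ) :
    HasDerivAt (fun x => exp (L * x / 2)) (exp (L * α / 2) * (L / 2)) α := by
  simpa using (((hasDerivAt_id α).const_mul L).div_const 2).exp

theorem hasDerivAt_phi (L α : ℝ) : HasDerivAt (phi L) (phi' L α) α := by
  have hq := (((hasDerivAt_pow 2 α).const_mul (L * (L - 4))).sub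
    ((hasDerivAt_id' α).const_mul (4 * (L - 2)))).add_const 8
  refine (((hq.mul (hasDerivAt_exp_mul_div_two L α)).sub
    ((hasDerivAt_id' α).const_mul 8)).sub_const 8).congr_deriv ?_
  simp only [phi', Pi.sub_apply]
  ring

theorem hasDerivAt_phi' (L α : ℝ) : HasDerivAt (phi' L) (phi'' L α) α := by
  have hq := (((hasDerivAt_pow 2 α).const_mul (L ^ 2 * (L - 4) / 2)).sub
    ((hasDerivAt_id' α).const_mul (4 * L))).add_const 8
  refine ((hq.mul (hasDerivAt_exp_mul_div_two L α)).sub_const 8).congr_deriv ?_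
  simp only [phi'', Pi.sub_apply]
  ring

theorem phi_zero (L : ℝ) : phi L 0 = 0 := by simp [phi]

theorem phi'_zero (L : ℝ) : phi' L 0 = 0 := by simp [phi']

theorem phi_pos_of_neg (hL4 : 4 < L) (hL6 : L ≤ 6) (hα : α < 0) : 0 < phi L α := by
  refine pos_of_lt_of_secondDeriv_pos (hasDerivAt_phi L) (hasDerivAt_phi' L) (phi_zero L)
    (phi'_zero L) (fun x hx => ?_) hα
  have hfac : L * (L - 4) / 4 * x + (L - 6) < 0 := by
    nlinarith [mul_neg_of_pos_of_neg (mul_pos (by linarith : (0 : ℝ) < L) (sub_pos.2 hL4)) hx]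
  exact mul_pos (mul_pos_of_neg_of_neg (mul_neg_of_pos_of_neg (by positivity) hx) hfac) (exp_pos _)

theorem phi_six_pos_of_pos (hα : 0 < α) : 0 < phi 6 α := by
  refine pos_of_gt_of_secondDeriv_pos (hasDerivAt_phi 6) (hasDerivAt_phi' 6) (phi_zero 6)
    (phi'_zero 6) (fun x hx => ?_) hα
  have h : phi'' 6 x = 108 * x ^ 2 * exp (6 * x / 2) := by simp only [phi'']; ring
  rw [h]
  positivity

theorem phi'_pos (hL : 4 < L) : 0 < phi' L (16 / (L * (L - 4))) := by
  have hL0 : 0 < L := by linarith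
  have hLL : 0 < L * (L - 4) := mul_pos hL0 (sub_pos.2 hL)
  set A := 16 / (L * (L - 4))
  have hA : L * (L - 4) * A = 16 := mul_div_cancel₀ _ hLL.ne'
  have hA0 : 0 < A := div_pos (by norm_num) hLL
  have hQ : L ^ 2 * (L - 4) / 2 * A ^ 2 - 4 * L * A + 8 = 4 * L * A + 8 := by
    linear_combination L * A / 2 * hA
  have hexp : 4 * L * A + 8 ≤ (4 * L * A + 8) * exp (L * A / 2) :=
    le_mul_of_one_le_right (by positivity) (one_le_exp (by positivity))
  simp only [phi', hQ]
  nlinarith [mul_pos hL0 hA0]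

theorem phi_pos (hL : 4 < L) : 0 < phi L (8 / (L - 4)) := by
  have hL0 : 0 < L := by linarith
  set B := 8 / (L - 4)
  have hB : (L - 4) * B = 8 := mul_div_cancel₀ _ (sub_pos.2 hL).ne'
  have hB0 : 0 < B := div_pos (by norm_num) (sub_pos.2 hL)
  have hP : L * (L - 4) * B ^ 2 - 4 * (L - 2) * B + 8 = 8 * B + 8 + 4 * L * B := by
    linear_combination L * B * hB
  have hexp : 8 * B + 8 + 4 * L * B ≤ (8 * B + 8 + 4 * L * B) * exp (L * B / 2) :=
    le_mul_of_one_le_right (by positivity) (one_le_exp (by positivity))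
  simp only [phi, hP]
  nlinarith [mul_pos hL0 hB0]

theorem phi''_eq (hL : 4 < L) (x : ℝ) :
    phi'' L x = L ^ 2 * (L * (L - 4) / 4) * (x * (x - 4 * (6 - L) / (L * (L - 4)))) *
      exp (L * x / 2) := by
  simp only [phi'']
  field_simp [(sub_pos.2 hL).ne']
  ring

theorem exists_phi'_sign_change (hL4 : 4 < L) (hL6 : L < 6) :
    ∃ γ, 0 < γ ∧ (∀ x ∈ Ioo 0 γ, phi' L x < 0) ∧ ∀ x ∈ Ioi γ, 0 < phi' L x := by
  have hLL : 0 < L * (L - 4) := mul_pos (by linarith) (sub_pos.2 hL4)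
  set β := 4 * (6 - L) / (L * (L - 4))
  have hβ : 0 < β := div_pos (by linarith) hLL
  have hanti : StrictAntiOn (phi' L) (Icc 0 β) :=
    strictAntiOn_of_hasDerivAt_neg (hasDerivAt_phi' L) (convex_Icc 0 β) fun x hx => by
      rw [interior_Icc, mem_Ioo] at hx
      rw [phi''_eq hL4]
      exact mul_neg_of_neg_of_pos (mul_neg_of_pos_of_neg (by positivity)
        (mul_neg_of_pos_of_neg hx.1 (sub_neg.2 hx.2))) (exp_pos _)
  have hmono : StrictMonoOn (phi' L) (Ici β) :=
    strictMonoOn_of_hasDerivAt_pos (hasDerivAt_phi' L) (convex_Ici β) fun x hx => by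
      rw [interior_Ici, mem_Ioi] at hx
      rw [phi''_eq hL4]
      exact mul_pos (mul_pos (by positivity) (mul_pos (hβ.trans hx) (sub_pos.2 hx))) (exp_pos _)
  obtain ⟨γ, hγ, -, hneg, hpos⟩ := exists_sign_change_of_strictAntiOn_of_strictMonoOn
    (fun x _ => (hasDerivAt_phi' L x).continuousAt.continuousWithinAt) (phi'_zero L) hβ
    hanti hmono (by positivity) (phi'_pos hL4)
  exact ⟨γ, hγ, hneg, hpos⟩

theorem existsUnique_pos_phi_eq_zero (hL4 : 4 < L) (hL6 : L < 6) :
    ∃! α, 0 < α ∧ phi L α = 0 := by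
  obtain ⟨γ, hγ, hneg', hpos'⟩ := exists_phi'_sign_change hL4 hL6
  have hanti : StrictAntiOn (phi L) (Icc 0 γ) :=
    strictAntiOn_of_hasDerivAt_neg (hasDerivAt_phi L) (convex_Icc 0 γ) fun x hx =>
      hneg' x (by rwa [interior_Icc] at hx)
  have hmono : StrictMonoOn (phi L) (Ici γ) :=
    strictMonoOn_of_hasDerivAt_pos (hasDerivAt_phi L) (convex_Ici γ) fun x hx =>
      hpos' x (by rwa [interior_Ici] at hx)
  obtain ⟨r, hr, hr0, hneg, hpos⟩ := exists_sign_change_of_strictAntiOn_of_strictMonoOn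
    (fun x _ => (hasDerivAt_phi L x).continuousAt.continuousWithinAt) (phi_zero L) hγ
    hanti hmono (div_pos (by norm_num) (sub_pos.2 hL4)).le (phi_pos hL4)
  refine ⟨r, ⟨hr, hr0⟩, fun x ⟨hx, hx0⟩ => ?_⟩
  rcases lt_trichotomy x r with hxr | rfl | hrx
  · exact absurd hx0 (hneg x ⟨hx, hxr⟩).ne
  · rfl
  · exact absurd hx0 (hpos x hrx).ne'

end H2

theorem h2_roots (L : ℝ) :
    (4 < L → L < 6 →
      (∃! α : ℝ, 0 < α ∧ h2 L α = 0) ∧ ∀ α : ℝ, α < 0 → h2 L α ≠ 0) ∧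
    (L = 6 → ∀ α : ℝ, α ≠ 0 → h2 L α ≠ 0) := by
  refine ⟨fun hL4 hL6 => ⟨?_, fun α hα => ?_⟩, fun hL α hα => ?_⟩
  · simpa only [H2.h2_eq_zero_iff] using H2.existsUnique_pos_phi_eq_zero hL4 hL6
  · exact H2.h2_eq_zero_iff.not.2 (H2.phi_pos_of_neg hL4 hL6.le hα).ne'
  · subst hL
    rw [Ne, H2.h2_eq_zero_iff]
    rcases hα.lt_or_gt with hα | hα
    · exact (H2.phi_pos_of_neg (by norm_num) le_rfl hα).ne'
    · exact (H2.phi_six_pos_of_pos hα).ne'
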